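/- arXiv:2401.01805 — 3 statements merged into one kernel-verified Lean document; each statement's English description precedes it below -/
import Mathlib

section
/- Let E_0 : [0,∞) → [0,1] be a nonincreasing right-continuous function with E_0(0) = 1 and E_0(t) → 0 as t → ∞, so that G = 1 − E_0 is the cumulative distribution function of a positive random variable. Let (T̃_i)_{i≥1} be i.i.d. random variables with distribution function G, let ν be independent of (T̃_i) with geometric distribution P(ν = k) = 2^{-k} for k = 1, 2, ..., and let T_a = Σ_{i=1}^{ν} T̃_i. Then for every s > 0, E[e^{-s T_a}] = (1 − s · L E_0(s)) / (1 + s · L E_0(s)), where L E_0(s) = ∫_0^∞ e^{-st} E_0(t) dt; that is, the geometric compound T_a solves the Slepian-based independent interval approximation equation determined by the expectation function E_0. -/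
/-!
Write `ψ = 𝔼[e^{-s T̃}]`. Conditioning on `ν`, which is independent of the i.i.d. summands, gives
`𝔼[e^{-s T_a}] = ∑ₖ P(ν = k) ψ^k`, the generating function of `ν` at `ψ`; for the geometric law
with parameter `1/2` this is `ψ / (2 - ψ)`. Writing `e^{-s T̃} = ∫_{t ≥ T̃} s e^{-st} dt` and
applying Fubini gives `ψ = 1 - s · L E₀(s)`, and then `ψ / (2 - ψ)` is the claimed ratio.
-/

open MeasureTheory ProbabilityTheory Real Set Filter

lemma setIntegral_Ioi_mul_exp_neg_mul {s : ℝ} (hs : 0 < s) (c : ℝ) :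
    ∫ t in Ioi c, s * exp (-s * t) = exp (-s * c) := by
  rw [integral_const_mul, integral_exp_mul_Ioi (neg_lt_zero.2 hs)]
  field_simp

lemma norm_exp_neg_mul_le_one {s x : ℝ} (hs : 0 ≤ s) (hx : 0 ≤ x) : ‖exp (-s * x)‖ ≤ 1 := by
  rw [norm_of_nonneg (exp_pos _).le, exp_le_one_iff, neg_mul, neg_nonpos]
  exact mul_nonneg hs hx

lemma integrable_exp_neg_mul_of_nonneg {Ω : Type*} [MeasurableSpace Ω] {μ : Measure Ω}
    [IsFiniteMeasure μ] {X : Ω → ℝ} {s : ℝ} (hs : 0 ≤ s) (hX : Measurable X)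
    (hX0 : ∀ ω, 0 ≤ X ω) : Integrable (fun ω => exp (-s * X ω)) μ :=
  .of_bound (hX.const_mul _).exp.aestronglyMeasurable 1 <|
    .of_forall fun ω => norm_exp_neg_mul_le_one hs (hX0 ω)

lemma norm_integral_exp_neg_mul_le_one {Ω : Type*} [MeasurableSpace Ω] {μ : Measure Ω}
    [IsProbabilityMeasure μ] {X : Ω → ℝ} {s : ℝ} (hs : 0 ≤ s) (hX0 : ∀ ω, 0 ≤ X ω) :
    ‖∫ ω, exp (-s * X ω) ∂μ‖ ≤ 1 := by
  simpa using norm_integral_le_of_norm_le_const (μ := μ)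
    (.of_forall fun ω => norm_exp_neg_mul_le_one hs (hX0 ω))

section LaplaceTransform

variable {Ω : Type*} [MeasurableSpace Ω] {μ : Measure Ω} [IsProbabilityMeasure μ] {X : Ω → ℝ}
  {s : ℝ}

lemma integral_exp_neg_mul_eq_setIntegral_cdf (hs : 0 < s) (hX : Measurable X)
    (hX0 : ∀ ω, 0 < X ω) :
    ∫ ω, exp (-s * X ω) ∂μ = ∫ t in Ioi 0, s * exp (-s * t) * μ.real {ω | X ω ≤ t} := by
  set g : ℝ → ℝ := fun t => s * exp (-s * t)
  have hg : IntegrableOn g (Ioi 0) := (exp_neg_integrableOn_Ioi 0 hs).const_mul s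
  have hinner (ω : Ω) : ∫ t in Ioi 0, (Ici (X ω)).indicator g t = exp (-s * X ω) := by
    rw [integral_indicator measurableSet_Ici, Measure.restrict_restrict measurableSet_Ici,
      inter_eq_left.2 (Ici_subset_Ioi.2 (hX0 ω)), integral_Ici_eq_integral_Ioi,
      setIntegral_Ioi_mul_exp_neg_mul hs]
  have houter (t : ℝ) : ∫ ω, (Ici (X ω)).indicator g t ∂μ = g t * μ.real {ω | X ω ≤ t} := by
    have hind : (fun ω => (Ici (X ω)).indicator g t) = {ω | X ω ≤ t}.indicator fun _ => g t :=
      rfl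
    rw [hind, integral_indicator_const _ (measurableSet_le hX measurable_const), smul_eq_mul,
      mul_comm]
  have hint : Integrable (Function.uncurry fun ω t => (Ici (X ω)).indicator g t)
      (μ.prod (volume.restrict (Ioi 0))) := by
    refine (Integrable.comp_snd hg μ).mono ?_ (.of_forall fun p => norm_indicator_le_norm_self _ _)
    refine (Measurable.ite ?_ ?_ measurable_const).aestronglyMeasurable
    · exact measurableSet_le (hX.comp measurable_fst) measurable_snd
    · exact (measurable_snd.const_mul (-s)).exp.const_mul s
  simp_rw [← hinner, integral_integral_swap hint, houter]
  rfl

lemma integral_exp_neg_mul_eq_one_sub_laplace_survival (hs : 0 < s) (hX : Measurable X)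
    (hX0 : ∀ ω, 0 < X ω) :
    ∫ ω, exp (-s * X ω) ∂μ = 1 - s * ∫ t in Ioi 0, exp (-s * t) * μ.real {ω | t < X ω} := by
  have hsurv : Antitone fun t => μ.real {ω | t < X ω} :=
    fun a b hab => measureReal_mono fun ω h => hab.trans_lt h
  have hint : IntegrableOn (fun t => exp (-s * t) * μ.real {ω | t < X ω}) (Ioi 0) := by
    refine (exp_neg_integrableOn_Ioi 0 hs).mono'
      ((measurable_id.const_mul _).exp.mul hsurv.measurable).aestronglyMeasurable
      (.of_forall fun t => ?_)
    rw [norm_mul, norm_of_nonneg (exp_pos _).le, neg_mul]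
    exact mul_le_of_le_one_right (exp_pos _).le ((norm_of_nonneg measureReal_nonneg).trans_le
      measureReal_le_one)
  have hcdf (t : ℝ) : μ.real {ω | X ω ≤ t} = 1 - μ.real {ω | t < X ω} := by
    rw [← probReal_compl_eq_one_sub (measurableSet_lt measurable_const hX)]
    simp only [compl_ofPred, not_lt]
  calc ∫ ω, exp (-s * X ω) ∂μ
      = ∫ t in Ioi 0, (s * exp (-s * t) - s * (exp (-s * t) * μ.real {ω | t < X ω})) := by
        simp_rw [integral_exp_neg_mul_eq_setIntegral_cdf hs hX hX0, hcdf, mul_sub, mul_one,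
          mul_assoc]
    _ = 1 - s * ∫ t in Ioi 0, exp (-s * t) * μ.real {ω | t < X ω} := by
        rw [integral_sub ((exp_neg_integrableOn_Ioi 0 hs).const_mul s) (hint.const_mul s),
          setIntegral_Ioi_mul_exp_neg_mul hs 0, integral_const_mul, mul_zero, exp_zero]

end LaplaceTransform

lemma hasSum_measureReal_preimage_singleton {Ω β : Type*} [MeasurableSpace Ω] {μ : Measure Ω}
    [IsProbabilityMeasure μ] [Countable β] [MeasurableSpace β] [MeasurableSingletonClass β]
    {f : Ω → β} (hf : Measurable f) : HasSum (fun b => μ.real (f ⁻¹' {b})) 1 := by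
  have h : ∑' b, μ (f ⁻¹' {b}) = 1 := by
    rw [← measure_iUnion (pairwise_disjoint_fiber f) fun b => hf (measurableSet_singleton b),
      ← preimage_iUnion, iUnion_of_singleton, preimage_univ, measure_univ]
  have hsum := ENNReal.hasSum_toReal (h ▸ ENNReal.one_ne_top)
  rwa [← ENNReal.tsum_toReal_eq fun b => measure_ne_top μ _, h, ENNReal.toReal_one] at hsum

lemma hasSum_mul_pow_of_geometric_half {p : ℕ → ℝ} (hp : HasSum p 1)
    (hgeom : ∀ k, 1 ≤ k → p k = (1 / 2) ^ k) {x : ℝ} (hx : |x| < 2) :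
    HasSum (fun k => p k * x ^ k) (x / (2 - x)) := by
  have hp0 : p 0 = 0 := by
    have htail : HasSum (fun n => p (n + 1)) 1 := by
      convert hasSum_geometric_two' 1 using 2 with n
      rw [hgeom _ n.succ_pos, div_div, ← pow_succ', one_div_pow]
    simpa using (hasSum_nat_add_iff' 1).2 hp |>.unique htail
  have htail : HasSum (fun n => p (n + 1) * x ^ (n + 1)) (x / (2 - x)) := by
    have hx2 : |x / 2| < 1 := by rw [abs_div, abs_two]; linarith
    have hsum : x / 2 * (1 - x / 2)⁻¹ = x / (2 - x) := by
      rw [← div_eq_mul_inv, one_sub_div two_ne_zero, div_div_div_cancel_right₀ two_ne_zero]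
    have hterm : (fun n => p (n + 1) * x ^ (n + 1)) = fun n => x / 2 * (x / 2) ^ n := by
      funext n
      rw [hgeom _ n.succ_pos, ← mul_pow, pow_succ']
      ring
    rw [hterm, ← hsum]
    exact (hasSum_geometric_of_abs_lt_one hx2).mul_left (x / 2)
  refine (hasSum_nat_add_iff' 1).1 ?_
  simpa [hp0] using htail

def randomSum {Ω : Type*} (X : ℕ → Ω → ℝ) (ν : Ω → ℕ) (ω : Ω) : ℝ :=
  ∑ i ∈ Finset.range (ν ω), X i ω

lemma randomSum_nonneg {Ω : Type*} {X : ℕ → Ω → ℝ} {ν : Ω → ℕ} (hX0 : ∀ i ω, 0 ≤ X i ω)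
    (ω : Ω) : 0 ≤ randomSum X ν ω :=
  Finset.sum_nonneg fun i _ => hX0 i ω

section RandomSum

variable {Ω : Type*} [MeasurableSpace Ω] {μ : Measure Ω} {X : ℕ → Ω → ℝ} {ν : Ω → ℕ} {s ψ : ℝ}

lemma measurable_randomSum (hX : ∀ i, Measurable (X i)) (hν : Measurable ν) :
    Measurable (randomSum X ν) := by
  have h : Measurable fun p : (ℕ → ℝ) × ℕ => ∑ i ∈ Finset.range p.2, p.1 i :=
    measurable_from_prod_countable_left fun n =>
      show Measurable fun x : ℕ → ℝ => ∑ i ∈ Finset.range n, x i from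
        Finset.measurable_sum _ fun i _ => measurable_pi_apply i
  exact h.comp ((measurable_pi_lambda _ hX).prodMk hν)

lemma integral_exp_neg_mul_sum_range (hX : ∀ i, Measurable (X i)) (hindep : iIndepFun X μ)
    (hψ : ∀ i, ∫ ω, exp (-s * X i ω) ∂μ = ψ) (k : ℕ) :
    ∫ ω, exp (-s * ∑ i ∈ Finset.range k, X i ω) ∂μ = ψ ^ k := by
  have h := hindep.mgf_sum (t := -s) hX (Finset.range k)
  simp only [mgf, Finset.sum_apply, hψ, Finset.prod_const, Finset.card_range] at h
  exact h

lemma setIntegral_preimage_singleton_exp_neg_mul_randomSum (hX : ∀ i, Measurable (X i))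
    (hν : Measurable ν) (hindep : iIndepFun X μ) (hνX : IndepFun ν (fun ω i => X i ω) μ)
    (hψ : ∀ i, ∫ ω, exp (-s * X i ω) ∂μ = ψ) (k : ℕ) :
    ∫ ω in ν ⁻¹' {k}, exp (-s * randomSum X ν ω) ∂μ = μ.real (ν ⁻¹' {k}) * ψ ^ k := by
  have hk : MeasurableSet (ν ⁻¹' {k}) := hν (measurableSet_singleton k)
  set Y : (ℕ → ℝ) → ℝ := fun x => exp (-s * ∑ i ∈ Finset.range k, x i)
  have hY : Measurable Y :=
    ((Finset.measurable_sum _ fun i _ => measurable_pi_apply i).const_mul _).exp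
  have hind : IndepFun ((ν ⁻¹' {k}).indicator 1) (fun ω => Y fun i => X i ω) μ :=
    hνX.comp (measurable_of_countable (({k} : Set ℕ).indicator (1 : ℕ → ℝ))) hY
  calc ∫ ω in ν ⁻¹' {k}, exp (-s * randomSum X ν ω) ∂μ
      = ∫ ω, (ν ⁻¹' {k}).indicator 1 ω * Y (fun i => X i ω) ∂μ := by
        rw [← integral_indicator hk]
        congr with ω
        by_cases hω : ν ω = k <;> simp [indicator, randomSum, Y, hω]
    _ = μ.real (ν ⁻¹' {k}) * ψ ^ k := by
        rw [hind.integral_fun_mul_eq_mul_integral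
          (measurable_one.indicator hk).aestronglyMeasurable
          (hY.comp (measurable_pi_lambda _ hX)).aestronglyMeasurable,
          integral_indicator_one hk, integral_exp_neg_mul_sum_range hX hindep hψ]

theorem hasSum_integral_exp_neg_mul_randomSum [IsProbabilityMeasure μ] (hs : 0 ≤ s)
    (hX : ∀ i, Measurable (X i)) (hX0 : ∀ i ω, 0 ≤ X i ω) (hν : Measurable ν) (hindep : iIndepFun X μ)
    (hνX : IndepFun ν (fun ω i => X i ω) μ) (hψ : ∀ i, ∫ ω, exp (-s * X i ω) ∂μ = ψ) :
    HasSum (fun k => μ.real (ν ⁻¹' {k}) * ψ ^ k) (∫ ω, exp (-s * randomSum X ν ω) ∂μ) := by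
  have h := hasSum_integral_iUnion (fun k => hν (measurableSet_singleton k))
    (pairwise_disjoint_fiber ν) (integrable_exp_neg_mul_of_nonneg (μ := μ) hs
      (measurable_randomSum hX hν) (randomSum_nonneg hX0)).integrableOn
  rwa [← preimage_iUnion, iUnion_of_singleton, preimage_univ, Measure.restrict_univ,
    funext (setIntegral_preimage_singleton_exp_neg_mul_randomSum hX hν hindep hνX hψ)] at h

end RandomSum

theorem stmt_2_general
    {Ω : Type*} [MeasureSpace Ω] [IsProbabilityMeasure (ℙ : Measure Ω)]
    (E₀ LE₀ : ℝ → ℝ) (T : ℕ → Ω → ℝ) (ν : Ω → ℕ) (Ta : Ω → ℝ)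
    (hmeas : ∀ i, Measurable (T i)) (hνmeas : Measurable ν)
    (hindep : iIndepFun T ℙ)
    (hpos : ∀ i ω, 0 < T i ω)
    (hcdf : ∀ i (x : ℝ), 0 ≤ x → (ℙ {ω | T i ω ≤ x}).toReal = 1 - E₀ x)
    (hνT : IndepFun ν (fun ω i => T i ω) ℙ)
    (hν : ∀ k : ℕ, 1 ≤ k → (ℙ {ω | ν ω = k}).toReal = (1 / 2 : ℝ) ^ k)
    (hTa : ∀ ω, Ta ω = ∑ i ∈ Finset.range (ν ω), T (i + 1) ω)
    (hL : ∀ s, LE₀ s = ∫ t in Set.Ioi (0:ℝ), Real.exp (-s * t) * E₀ t) :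
    ∀ s > 0, ∫ ω, Real.exp (-s * Ta ω) ∂ℙ
      = (1 - s * LE₀ s) / (1 + s * LE₀ s) := by
  intro s hs
  have hsurv (i : ℕ) (t : ℝ) (ht : 0 ≤ t) : (ℙ : Measure Ω).real {ω | t < T i ω} = E₀ t := by
    have h := probReal_compl_eq_one_sub (μ := ℙ)
      (measurableSet_le (hmeas i) (measurable_const (a := t)))
    simp only [compl_ofPred, not_le] at h
    rw [h, measureReal_def, hcdf i t ht, sub_sub_cancel]
  have hψ (i : ℕ) : ∫ ω, exp (-s * T i ω) ∂ℙ = 1 - s * LE₀ s := by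
    rw [integral_exp_neg_mul_eq_one_sub_laplace_survival hs (hmeas i) (hpos i), hL,
      setIntegral_congr_fun measurableSet_Ioi fun t ht => by rw [hsurv i t (le_of_lt ht)]]
  have hψ_abs : |1 - s * LE₀ s| < 2 := by
    rw [← hψ 0, ← Real.norm_eq_abs]
    exact (norm_integral_exp_neg_mul_le_one hs.le fun ω => (hpos 0 ω).le).trans_lt one_lt_two
  have hcompound := hasSum_integral_exp_neg_mul_randomSum hs.le (fun i => hmeas (i + 1))
    (fun i ω => (hpos (i + 1) ω).le) hνmeas (hindep.precomp (add_left_injective 1))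
    (hνT.comp measurable_id (measurable_pi_lambda _ fun i => measurable_pi_apply (i + 1)))
    fun i => hψ (i + 1)
  have hgeom := hasSum_mul_pow_of_geometric_half (hasSum_measureReal_preimage_singleton hνmeas)
    hν hψ_abs
  have hTa' : Ta = randomSum (fun i => T (i + 1)) ν := funext hTa
  rw [hTa', hcompound.unique hgeom]
  congr 1
  ring

/-- If `E₀ : [0,∞) → [0,1]` is nonincreasing, right-continuous, `E₀(0) = 1`,
`E₀(t) → 0`, and `T̃_i` are i.i.d. with cdf `G = 1 − E₀`, `ν` independent geometric with
`P(ν = k) = 2^{-k}`, then the geometric compound `T_a = Σ_{i=1}^{ν} T̃_i` satisfies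
`𝔼[e^{-s T_a}] = (1 − s·L E₀(s))/(1 + s·L E₀(s))` for all `s > 0`. -/
theorem stmt_2
    {Ω : Type*} [MeasureSpace Ω] [IsProbabilityMeasure (ℙ : Measure Ω)]
    (E₀ LE₀ : ℝ → ℝ) (T : ℕ → Ω → ℝ) (ν : Ω → ℕ) (Ta : Ω → ℝ)
    (hrange : ∀ t, 0 ≤ t → E₀ t ∈ Set.Icc (0 : ℝ) 1)
    (hanti : AntitoneOn E₀ (Set.Ici 0))
    (hrc : ∀ x, 0 ≤ x → ContinuousWithinAt E₀ (Set.Ici x) x)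
    (h0 : E₀ 0 = 1)
    (hlim : Filter.Tendsto E₀ Filter.atTop (nhds 0))
    (hmeas : ∀ i, Measurable (T i)) (hνmeas : Measurable ν)
    (hindep : iIndepFun T ℙ)
    (hident : ∀ i j, IdentDistrib (T i) (T j) ℙ ℙ)
    (hpos : ∀ i ω, 0 < T i ω)
    (hcdf : ∀ i (x : ℝ), 0 ≤ x → (ℙ {ω | T i ω ≤ x}).toReal = 1 - E₀ x)
    (hνT : IndepFun ν (fun ω i => T i ω) ℙ)
    (hν : ∀ k : ℕ, 1 ≤ k → (ℙ {ω | ν ω = k}).toReal = (1 / 2 : ℝ) ^ k)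
    (hTa : ∀ ω, Ta ω = ∑ i ∈ Finset.range (ν ω), T (i + 1) ω)
    (hL : ∀ s, LE₀ s = ∫ t in Set.Ioi (0:ℝ), Real.exp (-s * t) * E₀ t) :
    ∀ s > 0, ∫ ω, Real.exp (-s * Ta ω) ∂ℙ
      = (1 - s * LE₀ s) / (1 + s * LE₀ s) :=
  stmt_2_general E₀ LE₀ T ν Ta hmeas hνmeas hindep hpos hcdf hνT hν hTa hL
end

section
/- Let R be a standard Rayleigh random variable, i.e. with density f_R(x) = x e^{-x²/2} on (0,∞), let σ > 0, and let Z be a centered Gaussian random variable with variance σ², independent of R. Then for every real number a, P(−a R + Z > 0) = (1/2) (1 − a / √(a² + σ²)). -/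
open MeasureTheory ProbabilityTheory

open Set Real Filter Topology NNReal

/-!
For `a < 0` the event `a R < Z` is, given `Z = z`, the Rayleigh tail event `R > z / a`, of
probability `exp (-(max (z / a) 0) ^ 2 / 2)`. Averaging over `Z` and pairing `z` with `-z`
(the law of `Z` is symmetric) turns this into `(1 + E[exp (-Z ^ 2 / (2 a ^ 2))]) / 2`, a Gaussian
integral. The case `a ≥ 0` follows from `P(a R < Z) + P(-a R < Z) = 1`, which holds because
`(R, Z)` and `(R, -Z)` have the same law and `Z = a R` has probability zero.
-/

noncomputable def rayleigh : Measure ℝ :=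
  volume.withDensity fun x ↦ ENNReal.ofReal (if 0 < x then x * exp (-x ^ 2 / 2) else 0)

lemma hasDerivAt_neg_exp_neg_sq_div_two (x : ℝ) :
    HasDerivAt (fun y ↦ -exp (-y ^ 2 / 2)) (x * exp (-x ^ 2 / 2)) x := by
  have h : HasDerivAt (fun y : ℝ ↦ -y ^ 2 / 2) (-x) x :=
    ((hasDerivAt_pow 2 x).neg.div_const 2).congr_deriv (by ring)
  exact h.exp.neg.congr_deriv (by ring)

lemma tendsto_neg_exp_neg_sq_div_two : Tendsto (fun x : ℝ ↦ -exp (-x ^ 2 / 2)) atTop (𝓝 0) := by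
  have h : Tendsto (fun x : ℝ ↦ -x ^ 2 / 2) atTop atBot :=
    (tendsto_neg_atTop_atBot.comp (tendsto_pow_atTop two_ne_zero)).atBot_div_const two_pos
  simpa using (tendsto_exp_atBot.comp h).neg

lemma integrableOn_Ioi_mul_exp_neg_sq_div_two {c : ℝ} (hc : 0 ≤ c) :
    IntegrableOn (fun x ↦ x * exp (-x ^ 2 / 2)) (Ioi c) :=
  integrableOn_Ioi_deriv_of_nonneg (by fun_prop) (fun x _ ↦ hasDerivAt_neg_exp_neg_sq_div_two x)
    (fun x hx ↦ mul_nonneg (hc.trans hx.le) (exp_pos _).le) tendsto_neg_exp_neg_sq_div_two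

lemma integral_Ioi_mul_exp_neg_sq_div_two {c : ℝ} (hc : 0 ≤ c) :
    ∫ x in Ioi c, x * exp (-x ^ 2 / 2) = exp (-c ^ 2 / 2) := by
  simpa using integral_Ioi_of_hasDerivAt_of_tendsto (by fun_prop)
    (fun x _ ↦ hasDerivAt_neg_exp_neg_sq_div_two x) (integrableOn_Ioi_mul_exp_neg_sq_div_two hc)
    tendsto_neg_exp_neg_sq_div_two

lemma rayleigh_apply {s : Set ℝ} (hs : MeasurableSet s) :
    rayleigh s = ∫⁻ x in s ∩ Ioi 0, ENNReal.ofReal (x * exp (-x ^ 2 / 2)) := by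
  have hdens : (fun x : ℝ ↦ ENNReal.ofReal (if 0 < x then x * exp (-x ^ 2 / 2) else 0))
      = (Ioi 0).indicator fun x ↦ ENNReal.ofReal (x * exp (-x ^ 2 / 2)) := by
    ext x
    by_cases hx : 0 < x <;> simp [hx]
  rw [rayleigh, withDensity_apply _ hs, hdens, lintegral_indicator measurableSet_Ioi,
    Measure.restrict_restrict measurableSet_Ioi, inter_comm]

lemma rayleigh_Ioi (t : ℝ) : rayleigh (Ioi t) = ENNReal.ofReal (exp (-(max t 0) ^ 2 / 2)) := by
  rw [rayleigh_apply measurableSet_Ioi, Ioi_inter_Ioi, ← integral_Ioi_mul_exp_neg_sq_div_two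
    (le_max_right t 0), ofReal_integral_eq_lintegral_ofReal
    (integrableOn_Ioi_mul_exp_neg_sq_div_two (le_max_right t 0))]
  filter_upwards [ae_restrict_mem measurableSet_Ioi] with x hx
  exact mul_nonneg ((le_max_right t 0).trans hx.le) (exp_pos _).le

instance : IsProbabilityMeasure rayleigh where
  measure_univ := by
    rw [rayleigh_apply MeasurableSet.univ, univ_inter, ← inter_self (Ioi 0),
      ← rayleigh_apply measurableSet_Ioi, rayleigh_Ioi]
    simp

lemma integrable_exp_of_nonpos {α : Type*} [MeasurableSpace α] {μ : Measure α} [IsFiniteMeasure μ]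
    {f : α → ℝ} (hf : Measurable f) (hf0 : ∀ x, f x ≤ 0) : Integrable (fun x ↦ exp (f x)) μ :=
  Integrable.of_bound hf.exp.aestronglyMeasurable 1
    (ae_of_all _ fun x ↦ by simpa [abs_of_pos (exp_pos _)] using hf0 x)

lemma integral_exp_neg_mul_sq_gaussianReal {v : ℝ≥0} (hv : v ≠ 0) {k : ℝ}
    (hk : 0 < 1 + 2 * v * k) :
    ∫ z, exp (-k * z ^ 2) ∂gaussianReal 0 v = (√(1 + 2 * v * k))⁻¹ := by
  have hb : 0 < 1 / (2 * v) + k := by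
    have : 1 / (2 * v) + k = (1 + 2 * v * k) / (2 * v) := by field_simp
    rw [this]; positivity
  have hpdf : ∀ z : ℝ, gaussianPDFReal 0 v z * exp (-k * z ^ 2)
      = (√(2 * π * v))⁻¹ * exp (-(1 / (2 * v) + k) * z ^ 2) := by
    intro z
    rw [gaussianPDFReal, mul_assoc, ← exp_add]
    congr 2
    field_simp
    ring
  simp_rw [integral_gaussianReal_eq_integral_smul hv, smul_eq_mul, hpdf, integral_const_mul,
    integral_gaussian]
  have : π / (1 / (2 * v) + k) = 2 * π * v / (1 + 2 * v * k) := by field_simp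
  rw [this, sqrt_div (by positivity)]
  field_simp

lemma integral_exp_neg_sq_max_gaussianReal {v : ℝ≥0} (hv : v ≠ 0) (c : ℝ) :
    ∫ z, exp (-(max (c * z) 0) ^ 2 / 2) ∂gaussianReal 0 v = (1 + (√(1 + v * c ^ 2))⁻¹) / 2 := by
  set g : ℝ → ℝ := fun z ↦ exp (-(max (c * z) 0) ^ 2 / 2) with hg
  have hint : ∀ d : ℝ, Integrable (fun z ↦ exp (-(max (d * z) 0) ^ 2 / 2)) (gaussianReal 0 v) :=
    fun d ↦ integrable_exp_of_nonpos (by fun_prop) fun z ↦ by nlinarith [sq_nonneg (max (d * z) 0)]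
  have hreflect : ∫ z, g (-z) ∂gaussianReal 0 v = ∫ z, g z ∂gaussianReal 0 v := by
    rw [← integral_map measurable_neg.aemeasurable (by fun_prop), gaussianReal_map_neg, neg_zero]
  have hsum : ∀ z, g z + g (-z) = 1 + exp (-(c ^ 2 / 2) * z ^ 2) := by
    intro z
    rcases le_total (c * z) 0 with h | h
    · simp only [hg]
      rw [max_eq_right h, max_eq_left (by linarith)]
      norm_num
      ring_nf
    · simp only [hg]
      rw [max_eq_left h, max_eq_right (by linarith)]
      norm_num
      ring_nf
  have hpair : ∫ z, (g z + g (-z)) ∂gaussianReal 0 v = 1 + (√(1 + v * c ^ 2))⁻¹ := by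
    simp_rw [hsum]
    rw [integral_add (integrable_const 1) (integrable_exp_of_nonpos (by fun_prop) fun z ↦ by
        nlinarith [sq_nonneg c, sq_nonneg z, mul_nonneg (sq_nonneg c) (sq_nonneg z)]),
      integral_exp_neg_mul_sq_gaussianReal hv (by positivity)]
    simp only [integral_const, probReal_univ, smul_eq_mul, one_mul]
    ring_nf
  rw [integral_add (hint c) (by simpa [hg] using hint (-c)), hreflect] at hpair
  linarith

lemma measureReal_prod_lt_add_measureReal_prod_neg_lt {μ ν : Measure ℝ} [IsProbabilityMeasure μ]
    [IsProbabilityMeasure ν] [NullSingletonClass ν] (hν : ν.map (fun z ↦ -z) = ν) (a : ℝ) :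
    (μ.prod ν).real {p | a * p.1 < p.2} + (μ.prod ν).real {p | -a * p.1 < p.2} = 1 := by
  have hsym : (μ.prod ν).map (Prod.map id fun z ↦ -z) = μ.prod ν := by
    rw [← Measure.map_prod_map _ _ measurable_id measurable_neg, Measure.map_id, hν]
  have hlt : MeasurableSet {p : ℝ × ℝ | p.2 < a * p.1} :=
    measurableSet_lt measurable_snd (measurable_fst.const_mul a)
  have hreflect : (μ.prod ν).real {p | -a * p.1 < p.2} = (μ.prod ν).real {p | p.2 < a * p.1} := by
    rw [← hsym, map_measureReal_apply (by fun_prop) hlt]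
    congr 1
    ext p
    simp [neg_lt]
  have hdiag : (μ.prod ν) {p | p.2 = a * p.1} = 0 :=
    Measure.measure_prod_null_of_ae_null
      (measurableSet_eq_fun measurable_snd (measurable_fst.const_mul a))
      (ae_of_all _ fun r ↦ measure_singleton (a * r))
  have hdisj : Disjoint {p : ℝ × ℝ | a * p.1 < p.2} {p | p.2 < a * p.1} :=
    disjoint_left.mpr fun p (h : a * p.1 < p.2) ↦ h.not_gt
  have hunion : (μ.prod ν) ({p | a * p.1 < p.2} ∪ {p | p.2 < a * p.1}) = 1 := by
    rw [← prob_compl_eq_zero_iff ((measurableSet_lt (by fun_prop) (by fun_prop)).union hlt),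
      ← hdiag]
    congr 1
    ext p
    simp [le_antisymm_iff]
  rw [hreflect, ← measureReal_union hdisj hlt, measureReal_def, hunion, ENNReal.toReal_one]

lemma rayleigh_prod_gaussianReal_real_lt_of_neg {v : ℝ≥0} (hv : v ≠ 0) {a : ℝ} (ha : a < 0) :
    (rayleigh.prod (gaussianReal 0 v)).real {p | a * p.1 < p.2} = (1 - a / √(a ^ 2 + v)) / 2 := by
  have hS : MeasurableSet {p : ℝ × ℝ | a * p.1 < p.2} :=
    measurableSet_lt (measurable_fst.const_mul a) measurable_snd
  have hslice : ∀ z, (fun x ↦ (x, z)) ⁻¹' {p : ℝ × ℝ | a * p.1 < p.2} = Ioi (a⁻¹ * z) := by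
    intro z
    ext x
    rw [mem_preimage, mem_ofPred_eq, mem_Ioi, inv_mul_eq_div, div_lt_iff_of_neg ha, mul_comm]
  have hsqrt : √(1 + v * a⁻¹ ^ 2) = √(a ^ 2 + v) / -a := by
    rw [show 1 + v * a⁻¹ ^ 2 = (a ^ 2 + v) / (-a) ^ 2 by field_simp [ha.ne],
      sqrt_div' _ (sq_nonneg _), Real.sqrt_sq (by linarith)]
  calc (rayleigh.prod (gaussianReal 0 v)).real {p | a * p.1 < p.2}
      = (∫⁻ z, ENNReal.ofReal (exp (-(max (a⁻¹ * z) 0) ^ 2 / 2)) ∂gaussianReal 0 v).toReal := by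
        simp_rw [measureReal_def, Measure.prod_apply_symm hS, hslice, rayleigh_Ioi]
    _ = ∫ z, exp (-(max (a⁻¹ * z) 0) ^ 2 / 2) ∂gaussianReal 0 v := by
        rw [← integral_toReal (by fun_prop) (ae_of_all _ fun _ ↦ ENNReal.ofReal_lt_top)]
        simp_rw [ENNReal.toReal_ofReal (exp_pos _).le]
    _ = (1 + (√(1 + v * a⁻¹ ^ 2))⁻¹) / 2 := integral_exp_neg_sq_max_gaussianReal hv a⁻¹
    _ = (1 - a / √(a ^ 2 + v)) / 2 := by
        rw [hsqrt, inv_div, neg_div, ← sub_eq_add_neg]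

lemma rayleigh_prod_gaussianReal_real_lt {v : ℝ≥0} (hv : v ≠ 0) (a : ℝ) :
    (rayleigh.prod (gaussianReal 0 v)).real {p | a * p.1 < p.2} = (1 - a / √(a ^ 2 + v)) / 2 := by
  have : NullSingletonClass (gaussianReal 0 v) := nullSingletonClass_gaussianReal hv
  have hsym := measureReal_prod_lt_add_measureReal_prod_neg_lt (μ := rayleigh)
    (ν := gaussianReal 0 v) (by rw [gaussianReal_map_neg, neg_zero]) a
  rcases lt_trichotomy a 0 with ha | rfl | ha
  · exact rayleigh_prod_gaussianReal_real_lt_of_neg hv ha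
  · rw [neg_zero] at hsym
    simp only [zero_div, sub_zero]
    linarith
  · rw [rayleigh_prod_gaussianReal_real_lt_of_neg hv (neg_lt_zero.mpr ha), neg_sq,
      neg_div] at hsym
    linarith

/-- If `R` is standard Rayleigh (density `x e^{-x²/2}` on `(0,∞)`) and `Z` is an
independent centered Gaussian with variance `σ² > 0`, then for every real `a`,
`P(−aR + Z > 0) = (1/2)(1 − a/√(a² + σ²))`. -/
theorem stmt_6
    {Ω : Type*} [MeasureSpace Ω] [IsProbabilityMeasure (ℙ : Measure Ω)]
    (R Z : Ω → ℝ) (σ : ℝ) (hσ : 0 < σ)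
    (hR : Measurable R) (hZ : Measurable Z)
    (hRlaw : Measure.map R ℙ = volume.withDensity
      (fun x => ENNReal.ofReal (if 0 < x then x * Real.exp (-x ^ 2 / 2) else 0)))
    (hZlaw : Measure.map Z ℙ = gaussianReal 0 (Real.toNNReal (σ ^ 2)))
    (hindep : IndepFun R Z ℙ) :
    ∀ a : ℝ, (ℙ {ω | 0 < -a * R ω + Z ω}).toReal
      = (1 / 2) * (1 - a / Real.sqrt (a ^ 2 + σ ^ 2)) := by
  intro a
  have hv : (σ ^ 2).toNNReal ≠ 0 := by simp [hσ.ne']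
  have hlaw : Measure.map (fun ω ↦ (R ω, Z ω)) ℙ
      = rayleigh.prod (gaussianReal 0 (σ ^ 2).toNNReal) := by
    rw [(indepFun_iff_map_prod_eq_prod_map_map hR.aemeasurable hZ.aemeasurable).mp hindep, hRlaw,
      hZlaw, rayleigh]
  calc (ℙ {ω | 0 < -a * R ω + Z ω}).toReal
      = (Measure.map (fun ω ↦ (R ω, Z ω)) ℙ).real {p | a * p.1 < p.2} := by
        rw [map_measureReal_apply (hR.prodMk hZ)
          (measurableSet_lt (measurable_fst.const_mul a) measurable_snd), measureReal_def]
        congr 2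
        ext ω
        simp only [mem_ofPred_eq, mem_preimage, neg_mul, lt_neg_add_iff_add_lt, add_zero]
    _ = (1 / 2) * (1 - a / √(a ^ 2 + σ ^ 2)) := by
        rw [hlaw, rayleigh_prod_gaussianReal_real_lt hv, Real.coe_toNNReal _ (sq_nonneg σ)]
        ring
end

section
/- Let (T̃_i)_{i≥1} be i.i.d. nonnegative random variables and let b > 0 be such that P(T̃_1 > τ) ≥ e^{-bτ} for all τ > 0. Then for every k ≥ 1 and every τ > 0, P(T̃_1 + ... + T̃_k > τ) ≥ e^{-bτ} · Σ_{j=0}^{k-1} (bτ)^j / j!. -/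
/-!
Each `T̃_i` stochastically dominates an exponential variable of rate `b`, and the bound is the
tail `G_k(τ) = e^{-bτ} Σ_{j<k} (bτ)^j / j!` of a sum of `k` independent such variables, so the
theorem is the statement that stochastic domination passes to independent sums. Induct on `k`,
conditioning the partial sum `S_k + T` on its last summand `T`, with law `ν`:
`P(S_k + T > τ) = ∫ P(S_k > τ - t) dν(t) ≥ ∫ G_k((τ - t)⁺) dν(t)`. The integrand is
nondecreasing in `t`, with derivative the Erlang density `f_k(τ - t)` on `[0, τ]`, so the layer-cake
formula turns the integral into `G_k(τ) + ∫₀^τ ν[s, ∞) f_k(τ - s) ds`; bounding `ν[s, ∞) ≥ e^{-bs}`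
leaves an explicit integral equal to `G_{k+1}(τ) - G_k(τ)`.
-/

open MeasureTheory ProbabilityTheory Set Filter Topology
open scoped Nat

noncomputable def erlangTail (b : ℝ) (k : ℕ) (u : ℝ) : ℝ :=
  Real.exp (-b * u) * ∑ j ∈ Finset.range k, (b * u) ^ j / j !

/-- The density of a sum of `m + 1` independent exponential variables of rate `b`. -/
noncomputable def erlangDensity (b : ℝ) (m : ℕ) (u : ℝ) : ℝ :=
  b * Real.exp (-b * u) * (b * u) ^ m / m !

section

variable {b : ℝ}

lemma erlangTail_succ (b : ℝ) (m : ℕ) (u : ℝ) :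
    erlangTail b (m + 1) u = erlangTail b m u + Real.exp (-b * u) * (b * u) ^ m / m ! := by
  simp only [erlangTail, Finset.sum_range_succ]
  ring

lemma erlangTail_nonneg (hb : 0 ≤ b) (k : ℕ) {u : ℝ} (hu : 0 ≤ u) : 0 ≤ erlangTail b k u := by
  unfold erlangTail
  positivity

lemma erlangDensity_nonneg (hb : 0 ≤ b) (m : ℕ) {u : ℝ} (hu : 0 ≤ u) :
    0 ≤ erlangDensity b m u := by
  unfold erlangDensity
  positivity

@[fun_prop]
lemma continuous_erlangDensity (b : ℝ) (m : ℕ) : Continuous (erlangDensity b m) := by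
  unfold erlangDensity
  fun_prop

lemma hasDerivAt_exp_mul_pow_div_factorial (b : ℝ) (m : ℕ) (u : ℝ) :
    HasDerivAt (fun u ↦ Real.exp (-b * u) * (b * u) ^ (m + 1) / (m + 1) !)
      (erlangDensity b m u - erlangDensity b (m + 1) u) u := by
  have hexp : HasDerivAt (fun u ↦ Real.exp (-b * u)) (Real.exp (-b * u) * -b) u := by
    simpa using ((hasDerivAt_id u).const_mul (-b)).exp
  have hpow : HasDerivAt (fun u ↦ (b * u) ^ (m + 1)) ((m + 1 : ℕ) * (b * u) ^ m * b) u := by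
    simpa [Function.comp_def] using
      (hasDerivAt_pow (m + 1) (b * u)).comp u ((hasDerivAt_id u).const_mul b)
  refine ((hexp.mul hpow).div_const ((m + 1) ! : ℝ)).congr_deriv ?_
  simp only [erlangDensity, Nat.factorial_succ, Nat.cast_mul]
  field_simp
  ring

lemma hasDerivAt_erlangTail (b : ℝ) (m : ℕ) (u : ℝ) :
    HasDerivAt (erlangTail b (m + 1)) (-erlangDensity b m u) u := by
  induction m with
  | zero =>
    have h1 : erlangTail b 1 = fun u ↦ Real.exp (-b * u) := by ext; simp [erlangTail]
    rw [h1]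
    simpa [erlangDensity, mul_comm] using ((hasDerivAt_id u).const_mul (-b)).exp
  | succ m ih =>
    rw [show erlangTail b (m + 1 + 1) = _ from funext (erlangTail_succ b (m + 1))]
    exact (ih.fun_add (hasDerivAt_exp_mul_pow_div_factorial b m u)).congr_deriv (by ring)

lemma integral_erlangDensity_sub (b τ : ℝ) (m : ℕ) (x : ℝ) :
    ∫ s in 0..x, erlangDensity b m (τ - s) =
      erlangTail b (m + 1) (τ - x) - erlangTail b (m + 1) τ := by
  have := intervalIntegral.integral_eq_sub_of_hasDerivAt (a := τ - x) (b := τ)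
    (fun u _ ↦ hasDerivAt_erlangTail b m u)
    ((continuous_erlangDensity b m).neg.intervalIntegrable _ _)
  rw [intervalIntegral.integral_comp_sub_left (erlangDensity b m), sub_zero]
  rw [intervalIntegral.integral_neg] at this
  linarith

lemma integral_erlangDensity_sub_mul_exp (b τ : ℝ) (m : ℕ) :
    ∫ s in 0..τ, erlangDensity b m (τ - s) * Real.exp (-b * s) =
      Real.exp (-b * τ) * (b * τ) ^ (m + 1) / (m + 1) ! := by
  have hpt : ∀ s, erlangDensity b m (τ - s) * Real.exp (-b * s) =
      b ^ (m + 1) * Real.exp (-b * τ) / m ! * (τ - s) ^ m := fun s ↦ by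
    have hexp : Real.exp (-b * (τ - s)) * Real.exp (-b * s) = Real.exp (-b * τ) := by
      rw [← Real.exp_add]; ring_nf
    rw [erlangDensity, mul_pow, ← hexp]
    ring
  simp only [hpt, intervalIntegral.integral_const_mul,
    intervalIntegral.integral_comp_sub_left (fun x ↦ x ^ m), integral_pow]
  simp only [sub_self, sub_zero, Nat.factorial_succ, Nat.cast_mul]
  field_simp
  push_cast
  ring

lemma erlangTail_max_sub_eq_add_integral (b : ℝ) (m : ℕ) {τ t : ℝ} (hτ : 0 ≤ τ) (ht : 0 ≤ t) :
    erlangTail b (m + 1) (max (τ - t) 0) =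
      erlangTail b (m + 1) τ +
        ∫ s in 0..t, (Iic τ).indicator (fun s ↦ erlangDensity b m (τ - s)) s := by
  have hmax : max (τ - t) 0 = τ - min t τ := by
    rcases le_total t τ with h | h <;> simp [h]
  rw [intervalIntegral.integral_of_le ht, setIntegral_indicator measurableSet_Iic, Ioc_inter_Iic,
    ← intervalIntegral.integral_of_le (le_min ht hτ), integral_erlangDensity_sub, hmax]
  ring

lemma ofReal_exp_le_measure_Ioi {ν : Measure ℝ}
    (htail : ∀ s > 0, ENNReal.ofReal (Real.exp (-b * s)) ≤ ν (Ioi s)) {s : ℝ} (hs : 0 ≤ s) :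
    ENNReal.ofReal (Real.exp (-b * s)) ≤ ν (Ioi s) := by
  rcases hs.eq_or_lt with rfl | hs
  · have hlim : Tendsto (fun s ↦ ENNReal.ofReal (Real.exp (-b * s))) (𝓝[>] 0)
        (𝓝 (ENNReal.ofReal (Real.exp (-b * 0)))) :=
      ((ENNReal.continuous_ofReal.comp (by fun_prop)).tendsto 0).mono_left nhdsWithin_le_nhds
    exact le_of_tendsto hlim (eventually_nhdsWithin_of_forall fun s hs ↦
      (htail s hs).trans (measure_mono (Ioi_subset_Ioi (le_of_lt hs))))
  · exact htail s hs

lemma ae_nonneg_of_exp_le_measure_Ioi {ν : Measure ℝ} [IsProbabilityMeasure ν]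
    (htail : ∀ s > 0, ENNReal.ofReal (Real.exp (-b * s)) ≤ ν (Ioi s)) : ∀ᵐ t ∂ν, 0 ≤ t := by
  have h0 := ofReal_exp_le_measure_Ioi htail le_rfl
  rw [mul_zero, Real.exp_zero, ENNReal.ofReal_one] at h0
  exact ((ae_iff_prob_eq_one (measurableSet_setOfPred.1 measurableSet_Ioi)).2
    (le_antisymm prob_le_one h0)).mono fun t ht ↦ le_of_lt ht

lemma ofReal_erlangTail_succ_le_lintegral (hb : 0 ≤ b) {ν : Measure ℝ} [IsProbabilityMeasure ν]
    (htail : ∀ s > 0, ENNReal.ofReal (Real.exp (-b * s)) ≤ ν (Ioi s)) (m : ℕ) {τ : ℝ}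
    (hτ : 0 ≤ τ) :
    ENNReal.ofReal (erlangTail b (m + 2) τ) ≤
      ∫⁻ t, ENNReal.ofReal (erlangTail b (m + 1) (max (τ - t) 0)) ∂ν := by
  set g := (Iic τ).indicator fun s ↦ erlangDensity b m (τ - s)
  have hg_nonneg : ∀ s, 0 ≤ g s :=
    indicator_nonneg fun s hs ↦ erlangDensity_nonneg hb m (sub_nonneg.2 hs)
  have hν_nonneg : ∀ᵐ t ∂ν, 0 ≤ t := ae_nonneg_of_exp_le_measure_Ioi htail
  have hlayer : ∫⁻ t, ENNReal.ofReal (∫ s in 0..t, g s) ∂ν =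
      ∫⁻ s in Ioi 0, ν {a | s ≤ a} * ENNReal.ofReal (g s) :=
    lintegral_comp_eq_lintegral_meas_le_mul ν hν_nonneg aemeasurable_id (fun t _ ↦
      ((Continuous.integrableOn_uIcc (by fun_prop)).indicator measurableSet_Iic).intervalIntegrable)
    (ae_of_all _ hg_nonneg)
  have hexp_le : ENNReal.ofReal (∫ s in 0..τ, erlangDensity b m (τ - s) * Real.exp (-b * s)) ≤
      ∫⁻ s in Ioi 0, ν {a | s ≤ a} * ENNReal.ofReal (g s) := by
    rw [intervalIntegral.integral_of_le hτ, ofReal_integral_eq_lintegral_ofReal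
      (Continuous.integrableOn_Ioc (by fun_prop))
      ((ae_restrict_iff' measurableSet_Ioc).2 (ae_of_all _ fun s hs ↦
        mul_nonneg (erlangDensity_nonneg hb m (sub_nonneg.2 hs.2)) (Real.exp_pos _).le))]
    refine (setLIntegral_mono' measurableSet_Ioc fun s hs ↦ ?_).trans
      (lintegral_mono_set Ioc_subset_Ioi_self)
    rw [show g s = erlangDensity b m (τ - s) from indicator_of_mem (show s ∈ Iic τ from hs.2) _,
      ENNReal.ofReal_mul (erlangDensity_nonneg hb m (sub_nonneg.2 hs.2)), mul_comm]
    gcongr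
    exact (htail s hs.1).trans (measure_mono Ioi_subset_Ici_self)
  calc ENNReal.ofReal (erlangTail b (m + 2) τ)
      = ENNReal.ofReal (erlangTail b (m + 1) τ) +
          ENNReal.ofReal (∫ s in 0..τ, erlangDensity b m (τ - s) * Real.exp (-b * s)) := by
        rw [integral_erlangDensity_sub_mul_exp, ← ENNReal.ofReal_add
          (erlangTail_nonneg hb _ hτ) (by positivity), erlangTail_succ]
    _ ≤ ENNReal.ofReal (erlangTail b (m + 1) τ) +
          ∫⁻ s in Ioi 0, ν {a | s ≤ a} * ENNReal.ofReal (g s) := by gcongr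
    _ = ∫⁻ t, ENNReal.ofReal (erlangTail b (m + 1) τ) + ENNReal.ofReal (∫ s in 0..t, g s) ∂ν := by
        rw [lintegral_add_left measurable_const, lintegral_const, measure_univ, mul_one, hlayer]
    _ = ∫⁻ t, ENNReal.ofReal (erlangTail b (m + 1) (max (τ - t) 0)) ∂ν :=
        lintegral_congr_ae <| hν_nonneg.mono fun t ht ↦ by
          dsimp only
          rw [erlangTail_max_sub_eq_add_integral b m hτ ht, ENNReal.ofReal_add
            (erlangTail_nonneg hb _ hτ) (intervalIntegral.integral_nonneg ht fun s _ ↦ hg_nonneg s)]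

lemma ProbabilityTheory.IndepFun.measure_lt_add_eq_lintegral {Ω : Type*} [MeasurableSpace Ω]
    {μ : Measure Ω} [IsFiniteMeasure μ] {Y Z : Ω → ℝ} (h : IndepFun Y Z μ) (hY : Measurable Y)
    (hZ : Measurable Z) (τ : ℝ) :
    μ {ω | τ < Y ω + Z ω} = ∫⁻ z, μ {ω | τ - z < Y ω} ∂(μ.map Z) := by
  have hS : MeasurableSet {p : ℝ × ℝ | τ < p.1 + p.2} :=
    measurableSet_lt measurable_const (measurable_fst.add measurable_snd)
  calc μ {ω | τ < Y ω + Z ω} = μ.map (fun ω ↦ (Y ω, Z ω)) {p | τ < p.1 + p.2} :=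
        (Measure.map_apply (hY.prodMk hZ) hS).symm
    _ = ∫⁻ z, μ.map Y {y | τ - z < y} ∂(μ.map Z) := by
        rw [(indepFun_iff_map_prod_eq_prod_map_map hY.aemeasurable hZ.aemeasurable).1 h,
          Measure.prod_apply_symm hS]
        simp only [preimage_ofPred_eq, sub_lt_iff_lt_add]
    _ = ∫⁻ z, μ {ω | τ - z < Y ω} ∂(μ.map Z) :=
        lintegral_congr fun z ↦ Measure.map_apply hY measurableSet_Ioi

theorem ofReal_erlangTail_le_measure_lt_sum {Ω : Type*} [MeasurableSpace Ω] {μ : Measure Ω}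
    [IsProbabilityMeasure μ] {X : ℕ → Ω → ℝ} (hb : 0 ≤ b) (hmeas : ∀ i, Measurable (X i))
    (hindep : iIndepFun X μ)
    (htail : ∀ i, ∀ s > 0, ENNReal.ofReal (Real.exp (-b * s)) ≤ μ {ω | s < X i ω}) (n : ℕ)
    {τ : ℝ} (hτ : 0 ≤ τ) :
    ENNReal.ofReal (erlangTail b (n + 1) τ) ≤ μ {ω | τ < ∑ i ∈ Finset.range (n + 1), X i ω} := by
  have hlaw : ∀ i, ∀ s > 0, ENNReal.ofReal (Real.exp (-b * s)) ≤ μ.map (X i) (Ioi s) :=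
    fun i s hs ↦ (Measure.map_apply (hmeas i) measurableSet_Ioi).symm ▸ htail i s hs
  induction n generalizing τ with
  | zero =>
    simpa [erlangTail, Measure.map_apply (hmeas 0) measurableSet_Ioi, preimage] using
      ofReal_exp_le_measure_Ioi (hlaw 0) hτ
  | succ n ih =>
    set S : Ω → ℝ := fun ω ↦ ∑ i ∈ Finset.range (n + 1), X i ω
    have hS : IndepFun S (X (n + 1)) μ := by
      simpa [S, Finset.sum_fn] using
        hindep.indepFun_finsetSum_of_notMem hmeas Finset.notMem_range_self
    have hIH : ∀ t,
        ENNReal.ofReal (erlangTail b (n + 1) (max (τ - t) 0)) ≤ μ {ω | τ - t < S ω} := by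
      intro t
      rcases le_total t τ with h | h
      · rw [max_eq_left (sub_nonneg.2 h)]
        exact ih (sub_nonneg.2 h)
      · rw [max_eq_right (sub_nonpos.2 h)]
        exact (ih le_rfl).trans (measure_mono fun ω hω ↦ (sub_nonpos.2 h).trans_lt hω)
    have := Measure.isProbabilityMeasure_map (μ := μ) (hmeas (n + 1)).aemeasurable
    calc ENNReal.ofReal (erlangTail b (n + 2) τ)
        ≤ ∫⁻ t, ENNReal.ofReal (erlangTail b (n + 1) (max (τ - t) 0)) ∂(μ.map (X (n + 1))) :=
          ofReal_erlangTail_succ_le_lintegral hb (hlaw (n + 1)) n hτ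
      _ ≤ ∫⁻ t, μ {ω | τ - t < S ω} ∂(μ.map (X (n + 1))) := lintegral_mono hIH
      _ = μ {ω | τ < ∑ i ∈ Finset.range (n + 2), X i ω} := by
          rw [← hS.measure_lt_add_eq_lintegral (Finset.measurable_sum _ fun i _ ↦ hmeas i)
            (hmeas (n + 1))]
          simp only [S, Finset.sum_range_succ _ (n + 1)]

end

theorem stmt_11_general
    {Ω : Type*} [MeasureSpace Ω] [IsProbabilityMeasure (ℙ : Measure Ω)]
    (T : ℕ → Ω → ℝ) (b : ℝ) (hb : 0 < b)
    (hmeas : ∀ i, Measurable (T i))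
    (hindep : iIndepFun T ℙ)
    (hident : ∀ i j, IdentDistrib (T i) (T j) ℙ ℙ)
    (htail : ∀ τ > 0, (ℙ {ω | τ < T 1 ω}).toReal ≥ Real.exp (-b * τ)) :
    ∀ k : ℕ, 1 ≤ k → ∀ τ > 0,
      (ℙ {ω | τ < ∑ i ∈ Finset.range k, T (i + 1) ω}).toReal
        ≥ Real.exp (-b * τ) * ∑ j ∈ Finset.range k, (b * τ) ^ j / (Nat.factorial j) := by
  intro k hk τ hτ
  obtain ⟨n, rfl⟩ := Nat.exists_eq_add_of_le' hk
  have htail' : ∀ i, ∀ s > 0,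
      ENNReal.ofReal (Real.exp (-b * s)) ≤ ℙ {ω | s < T (i + 1) ω} := fun i s hs ↦
    (hident (i + 1) 1).measure_mem_eq measurableSet_Ioi ▸
      ENNReal.ofReal_le_of_le_toReal (htail s hs)
  exact (ENNReal.ofReal_le_iff_le_toReal (measure_ne_top _ _)).1
    (ofReal_erlangTail_le_measure_lt_sum hb.le (fun i ↦ hmeas (i + 1))
      (hindep.precomp Nat.succ_injective) htail' n hτ.le)

/-- If `T̃_i` are i.i.d. nonnegative with `P(T̃_1 > τ) ≥ e^{-bτ}` for all
`τ > 0`, then for every `k ≥ 1` and `τ > 0`,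
`P(T̃_1 + ⋯ + T̃_k > τ) ≥ e^{-bτ} Σ_{j=0}^{k-1} (bτ)^j/j!`. -/
theorem stmt_11
    {Ω : Type*} [MeasureSpace Ω] [IsProbabilityMeasure (ℙ : Measure Ω)]
    (T : ℕ → Ω → ℝ) (b : ℝ) (hb : 0 < b)
    (hmeas : ∀ i, Measurable (T i))
    (hindep : iIndepFun T ℙ)
    (hident : ∀ i j, IdentDistrib (T i) (T j) ℙ ℙ)
    (hnonneg : ∀ i ω, 0 ≤ T i ω)
    (htail : ∀ τ > 0, (ℙ {ω | τ < T 1 ω}).toReal ≥ Real.exp (-b * τ)) :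
    ∀ k : ℕ, 1 ≤ k → ∀ τ > 0,
      (ℙ {ω | τ < ∑ i ∈ Finset.range k, T (i + 1) ω}).toReal
        ≥ Real.exp (-b * τ) * ∑ j ∈ Finset.range k, (b * τ) ^ j / (Nat.factorial j) :=
  stmt_11_general T b hb hmeas hindep hident htail
end
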